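/- Fix integers 1 ≤ k ≤ n and assignments t, x ∈ {0,1}^n, let d be the number of positions j with x_j = t_j, and let S_t be the set of all k-clauses satisfied by t. If a clause is drawn uniformly at random from S_t, then the probability μ_{k,x} that it is satisfied by x equals (2^k − 2)/(2^k − 1) + C(d,k)/((2^k − 1)·C(n,k)); in particular μ_{k,x} ≤ 1 and (2^k − 1)·μ_{k,x} − (2^k − 2) = C(d,k)/C(n,k). -/

import Mathlib

open Finset

/-- A `k`-clause over `n` Boolean variables, encoded as a partial assignment
`c : Fin n → Option (Fin 2)` whose support (the clause's variable set `S`) has size `k`;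
`c j = some a` means `j ∈ S` with `ε(j) = a`. -/
def KClause (n k : ℕ) : Type :=
  {c : Fin n → Option (Fin 2) // (Finset.univ.filter (fun j => (c j).isSome)).card = k}

instance (n k : ℕ) : Fintype (KClause n k) := by
  unfold KClause; infer_instance

instance (n k : ℕ) : DecidableEq (KClause n k) := by
  unfold KClause; infer_instance

/-- The clause `c` is satisfied by the assignment `x` iff some literal of `c` is not
violated by `x`, i.e. `∃ j ∈ S` with `x j ≠ ε(j)`. -/
def ClauseSat {n k : ℕ} (x : Fin n → Fin 2) (c : KClause n k) : Prop :=
  ∃ j a, c.1 j = some a ∧ x j ≠ a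

instance {n k : ℕ} (x : Fin n → Fin 2) : DecidablePred (ClauseSat (k := k) x) := by
  intro c; unfold ClauseSat; infer_instance

/-- Number of positions where `x` agrees with `t`. -/
def agree {n : ℕ} (x t : Fin n → Fin 2) : ℕ :=
  (Finset.univ.filter (fun j => x j = t j)).card

/-! A clause falsified by `t` is determined by its variable set `S` (its signs must be `t` on
`S`), so the clauses falsified by `t` correspond to the `k`-subsets of the variables, and those
falsified by both `t` and `x` to the `k`-subsets of the `d` positions where `t` and `x` agree.
With `C(n,k) 2^k` clauses in all, `|S_t| = C(n,k) (2^k - 1)` and, by inclusion–exclusion,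
`C(n,k) (2^k - 2) + C(d,k)` clauses are satisfied by both assignments. -/

theorem Finset.card_filter_and_add_card_filter_not_add_card_filter_not {α : Type*}
    (s : Finset α) (p q : α → Prop) [DecidablePred p] [DecidablePred q] :
    #(s.filter fun a => p a ∧ q a) + #(s.filter fun a => ¬ p a) + #(s.filter fun a => ¬ q a)
      = #s + #(s.filter fun a => ¬ p a ∧ ¬ q a) := by
  classical
  have hcompl := card_filter_add_card_filter_not (s := s) fun a => p a ∧ q a
  have hunion := card_union_add_card_inter (s.filter fun a => ¬ p a) (s.filter fun a => ¬ q a)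
  rw [← filter_or, ← filter_and, filter_congr fun a _ => (not_and_or (a := p a)).symm] at hunion
  omega

section OptionValued

variable {α β : Type*} [Fintype α] [DecidableEq α] [Fintype β]

theorem card_optionFun_isSome_eq (S : Finset α) :
    #(univ.filter fun f : α → Option β => univ.filter (fun a => (f a).isSome) = S)
      = Fintype.card β ^ #S := by
  have hpi : (univ.filter fun f : α → Option β => univ.filter (fun a => (f a).isSome) = S)
      = Fintype.piFinset fun a => if a ∈ S then univ.map .some else {none} := by
    ext f
    simp only [mem_filter, mem_univ, true_and, Fintype.mem_piFinset, Finset.ext_iff]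
    refine forall_congr' fun a => ?_
    split_ifs with ha <;> cases f a <;> simp [ha]
  rw [hpi, Fintype.card_piFinset]
  simp only [apply_ite Finset.card, card_map, card_univ, card_singleton]
  rw [prod_ite_mem, univ_inter, prod_const]

theorem card_optionFun_isSome_card_eq (k : ℕ) :
    Fintype.card {f : α → Option β // #(univ.filter fun a => (f a).isSome) = k}
      = (Fintype.card α).choose k * Fintype.card β ^ k := by
  rw [Fintype.card_subtype, card_eq_sum_card_fiberwise (t := powersetCard k univ)
    (f := fun f : α → Option β => univ.filter fun a => (f a).isSome)
    (fun f hf => by simpa using hf)]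
  have hfiber : ∀ S ∈ powersetCard k univ,
      #((univ.filter fun f : α → Option β => #(univ.filter fun a => (f a).isSome) = k).filter
        fun f => univ.filter (fun a => (f a).isSome) = S) = Fintype.card β ^ k := by
    intro S hS
    rw [← (mem_powersetCard.1 hS).2, filter_filter, ← card_optionFun_isSome_eq S]
    congr 1
    exact filter_congr fun f _ => and_iff_right_of_imp fun h => h ▸ rfl
  rw [sum_congr rfl hfiber, sum_const, card_powersetCard, card_univ, smul_eq_mul]

end OptionValued

namespace KClause

variable {n k : ℕ}

theorem card_eq : Fintype.card (KClause n k) = n.choose k * 2 ^ k := by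
  have h := card_optionFun_isSome_card_eq (α := Fin n) (β := Fin 2) k
  rw [Fintype.card_fin, Fintype.card_fin] at h
  exact h

def vars (c : KClause n k) : Finset (Fin n) := univ.filter fun j => (c.1 j).isSome

theorem card_vars (c : KClause n k) : #c.vars = k := c.2

def falsifiedBy (t : Fin n → Fin 2) (S : Finset (Fin n)) (hS : #S = k) : KClause n k :=
  ⟨fun j => if j ∈ S then some (t j) else none, by simpa using hS⟩

variable {t x : Fin n → Fin 2}

theorem vars_falsifiedBy (S : Finset (Fin n)) (hS : #S = k) : (falsifiedBy t S hS).vars = S := by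
  ext j; simp [vars, falsifiedBy]

theorem not_clauseSat_falsifiedBy_iff (S : Finset (Fin n)) (hS : #S = k) :
    ¬ ClauseSat x (falsifiedBy t S hS) ↔ ∀ j ∈ S, x j = t j := by
  simp only [ClauseSat, falsifiedBy, not_exists, not_and, not_not]
  refine forall_congr' fun j => ?_
  by_cases hj : j ∈ S <;> simp [hj, eq_comm]

theorem eq_falsifiedBy_vars {c : KClause n k} (h : ¬ ClauseSat t c) :
    c = falsifiedBy t c.vars c.card_vars := by
  refine Subtype.ext (funext fun j => ?_)
  rcases hj : c.1 j with _ | a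
  · simp [falsifiedBy, vars, hj]
  · have : t j = a := by_contra fun hne => h ⟨j, a, hj, hne⟩
    simp [falsifiedBy, vars, hj, this]

theorem card_filter_not_clauseSat_and (t x : Fin n → Fin 2) :
    #(univ.filter fun c : KClause n k => ¬ ClauseSat t c ∧ ¬ ClauseSat x c)
      = (agree x t).choose k := by
  rw [agree, ← card_powersetCard]
  refine card_bij (fun c _ => c.vars) (fun c hc => ?_) (fun c₁ hc₁ c₂ hc₂ hvars => ?_)
    (fun S hS => ?_)
  · obtain ⟨ht, hx⟩ := (mem_filter_univ _).1 hc
    rw [eq_falsifiedBy_vars ht, not_clauseSat_falsifiedBy_iff] at hx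
    exact mem_powersetCard.2 ⟨fun j hj => (mem_filter_univ _).2 (hx j hj), c.card_vars⟩
  · rw [eq_falsifiedBy_vars ((mem_filter_univ _).1 hc₁).1,
      eq_falsifiedBy_vars ((mem_filter_univ _).1 hc₂).1]
    congr 1
  · obtain ⟨hSA, hSk⟩ := mem_powersetCard.1 hS
    refine ⟨falsifiedBy t S hSk, ?_, vars_falsifiedBy S hSk⟩
    rw [mem_filter_univ, not_clauseSat_falsifiedBy_iff, not_clauseSat_falsifiedBy_iff]
    exact ⟨fun _ _ => rfl, fun j hj => (mem_filter_univ j).1 (hSA hj)⟩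

theorem card_filter_not_clauseSat (t : Fin n → Fin 2) :
    #(univ.filter fun c : KClause n k => ¬ ClauseSat t c) = n.choose k := by
  simpa [agree] using card_filter_not_clauseSat_and (k := k) t t

theorem card_filter_clauseSat_add (t : Fin n → Fin 2) :
    #(univ.filter fun c : KClause n k => ClauseSat t c) + n.choose k = n.choose k * 2 ^ k := by
  rw [← card_eq, ← card_univ, ← card_filter_not_clauseSat t]
  exact card_filter_add_card_filter_not _

theorem card_filter_clauseSat_and_add (t x : Fin n → Fin 2) :
    #(univ.filter fun c : KClause n k => ClauseSat t c ∧ ClauseSat x c) + 2 * n.choose k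
      = n.choose k * 2 ^ k + (agree x t).choose k := by
  have h := card_filter_and_add_card_filter_not_add_card_filter_not (univ : Finset (KClause n k))
    (ClauseSat t) (ClauseSat x)
  rw [card_filter_not_clauseSat, card_filter_not_clauseSat, card_filter_not_clauseSat_and,
    card_univ, card_eq] at h
  omega

end KClause

/-- Drawing a clause uniformly from `S_t` (the set of `k`-clauses satisfied by `t`), the
probability `μ_{k,x}` that it is also satisfied by `x` equals
`(2^k − 2)/(2^k − 1) + C(d,k)/((2^k − 1)·C(n,k))`; in particular `μ_{k,x} ≤ 1` and
`(2^k − 1)·μ_{k,x} − (2^k − 2) = C(d,k)/C(n,k)`. -/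
theorem uniform_clause_sat_probability (n k : ℕ) (hk : 1 ≤ k) (hkn : k ≤ n)
    (t x : Fin n → Fin 2) :
    let St : Finset (KClause n k) := Finset.univ.filter (fun c => ClauseSat t c)
    let μ : ℝ := ((St.filter (fun c => ClauseSat x c)).card : ℝ) / (St.card : ℝ)
    let d : ℕ := agree x t
    μ = ((2 : ℝ) ^ k - 2) / ((2 : ℝ) ^ k - 1)
        + (d.choose k : ℝ) / (((2 : ℝ) ^ k - 1) * (n.choose k : ℝ)) ∧
    μ ≤ 1 ∧
    ((2 : ℝ) ^ k - 1) * μ - ((2 : ℝ) ^ k - 2) = (d.choose k : ℝ) / (n.choose k : ℝ) := by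
  intro St μ d
  have hSt : (#St : ℝ) = n.choose k * (2 ^ k - 1) := by
    have h : (#St + n.choose k : ℝ) = n.choose k * 2 ^ k := by
      exact_mod_cast KClause.card_filter_clauseSat_add t
    linarith
  have hSat :
      (#(St.filter fun c => ClauseSat x c) : ℝ) = n.choose k * (2 ^ k - 2) + d.choose k := by
    have h : (#(St.filter fun c => ClauseSat x c) + 2 * n.choose k : ℝ)
        = n.choose k * 2 ^ k + d.choose k := by
      rw [filter_filter]
      exact_mod_cast KClause.card_filter_clauseSat_and_add t x
    linarith
  have hN : (n.choose k : ℝ) ≠ 0 := by exact_mod_cast (Nat.choose_pos hkn).ne'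
  have h2k : (2 : ℝ) ^ k - 1 ≠ 0 := by
    have : (2 : ℝ) ≤ 2 ^ k := by simpa using pow_le_pow_right₀ one_le_two hk
    linarith
  have hμ : μ = ((2 : ℝ) ^ k - 2) / ((2 : ℝ) ^ k - 1)
      + (d.choose k : ℝ) / (((2 : ℝ) ^ k - 1) * (n.choose k : ℝ)) := by
    simp only [μ, hSt, hSat]
    field_simp
  refine ⟨hμ, div_le_one_of_le₀ (by exact_mod_cast card_filter_le _ _) (by positivity), ?_⟩
  rw [hμ]
  field_simp
  ring
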